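/- arXiv:2403.15718 — 3 statements merged into one kernel-verified Lean document; each statement's English description precedes it below -/
import Mathlib

section
/- (Equivalence of the Gibbs-Thomson condition with the momentum balance.) Let $\rho_1, \rho_2, \rho_* > 0$ with $1/\rho_* = (1/\rho_1 + 1/\rho_2)/2$, and let $\psi_1, \psi_2, T_1, T_2, \sigma H, j \in \mathbb{R}$. Assume the momentum balance $(1/\rho_2 - 1/\rho_1) j^2 - (T_2 - T_1) = \sigma H$. Then the Gibbs-Thomson relation $(\psi_2 - \psi_1) + \left(\frac{1}{2\rho_2^2} - \frac{1}{2\rho_1^2}\right) j^2 - \left(\frac{T_2}{\rho_2} - \frac{T_1}{\rho_1}\right) = 0$ holds if and only if $(\psi_2 - \psi_1) - \left(\frac{1}{\rho_2} - \frac{1}{\rho_1}\right)\frac{T_1 + T_2}{2} + \frac{\sigma H}{\rho_*} = 0$. -/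
theorem gibbs_thomson_equiv (ρ1 ρ2 ρs ψ1 ψ2 T1 T2 σH j : ℝ)
    (h1 : 0 < ρ1) (h2 : 0 < ρ2) (hρs : 0 < ρs)
    (hs : 1 / ρs = (1 / ρ1 + 1 / ρ2) / 2)
    (hmom : (1 / ρ2 - 1 / ρ1) * j ^ 2 - (T2 - T1) = σH) :
    ((ψ2 - ψ1) + (1 / (2 * ρ2 ^ 2) - 1 / (2 * ρ1 ^ 2)) * j ^ 2 - (T2 / ρ2 - T1 / ρ1) = 0)
      ↔ ((ψ2 - ψ1) - (1 / ρ2 - 1 / ρ1) * ((T1 + T2) / 2) + σH / ρs = 0) := by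
  have key : σH / ρs = σH * ((1 / ρ1 + 1 / ρ2) / 2) := by
    rw [div_eq_mul_one_div, hs]
  rw [key, ← hmom]
  constructor <;> intro h <;> [linear_combination h; linear_combination h] <;> skip
end

section
/- (Existence and uniqueness for the free boundary ODE, Lemma 4.2.) Let $a, b, c, y_0, z_0$ be positive real constants. Then there exists a unique pair $(\hat x, y)$ with $\hat x > 0$ and $y: [0,\hat x]\to\mathbb{R}$ twice differentiable such that $b\,y'(x) - a\,y''(x) - c = 0$ for $0 < x < \hat x$, $y(0) = -y_0$, $y(\hat x) = 0$, and $y'(\hat x) = z_0$. -/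
/-!
Writing `z = y'`, the equation is the linear ODE `a z' = b z - c` with terminal value
`z (x̂) = z₀`; together with `y (x̂) = 0` this determines `y = P (· - x̂)` for an explicit
profile `P` that does not depend on `x̂`. The remaining condition `y 0 = -y₀` becomes
`P (-x̂) = -y₀`, and `P` is strictly increasing on `(-∞, 0]` with `P 0 = 0` and `P → -∞`,
so it has exactly one root `x̂ > 0`.
-/

/-- `y` solves the free boundary problem `b y' - a y'' - c = 0` on `(0, x̂)`
with `y(0) = -y₀`, `y(x̂) = 0`, `y'(x̂) = z₀`. -/
def SolvesFBP (a b c y0 z0 xhat : ℝ) (y : ℝ → ℝ) : Prop :=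
  (∀ x ∈ Set.Icc 0 xhat, DifferentiableAt ℝ y x ∧ DifferentiableAt ℝ (deriv y) x) ∧
  (∀ x ∈ Set.Ioo 0 xhat, b * deriv y x - a * deriv (deriv y) x - c = 0) ∧
  y 0 = -y0 ∧ y xhat = 0 ∧ deriv y xhat = z0

open Set

theorem hasDerivAt_exp_const_mul (k s : ℝ) :
    HasDerivAt (fun s => Real.exp (k * s)) (Real.exp (k * s) * k) s := by
  simpa using ((hasDerivAt_id s).const_mul k).exp

theorem ContinuousOn.apply_eq_right_of_hasDerivAt_zero {f : ℝ → ℝ} {p q : ℝ}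
    (hf : ContinuousOn f (Icc p q)) (hf' : ∀ x ∈ Ioo p q, HasDerivAt f 0 x) :
    ∀ x ∈ Icc p q, f x = f q := by
  intro x hx
  rcases hx.2.eq_or_lt with rfl | hxq
  · rfl
  obtain ⟨ξ, -, hξ⟩ := exists_hasDerivAt_eq_slope f (fun _ => 0) hxq
    (hf.mono (Icc_subset_Icc_left hx.1))
    (fun ξ hξ => hf' ξ ⟨hx.1.trans_lt hξ.1, hξ.2⟩)
  rw [eq_comm, div_eq_zero_iff, sub_eq_zero, sub_eq_zero] at hξ
  exact (hξ.resolve_right hxq.ne').symm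

theorem ContinuousOn.eqOn_zero_of_hasDerivAt_mul {u : ℝ → ℝ} {p q k : ℝ}
    (hu : ContinuousOn u (Icc p q)) (hu' : ∀ x ∈ Ioo p q, HasDerivAt u (k * u x) x)
    (huq : u q = 0) : EqOn u 0 (Icc p q) := by
  -- the integrating factor `exp (-k x)` turns `u' = k u` into `(exp (-k x) u)' = 0`
  set g : ℝ → ℝ := fun x => Real.exp (-k * x) * u x
  have hg : ContinuousOn g (Icc p q) := by fun_prop
  have hg' : ∀ x ∈ Ioo p q, HasDerivAt g 0 x := fun x hx =>
    ((hasDerivAt_exp_const_mul (-k) x).mul (hu' x hx)).congr_deriv (by ring)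
  intro x hx
  have hgx := hg.apply_eq_right_of_hasDerivAt_zero hg' x hx
  simpa [g, huq, (Real.exp_pos _).ne'] using hgx

section Profile

variable (a b c z0 : ℝ)

/-- The solution with free boundary at `T` is `x ↦ fbpProfile a b c z0 (x - T)`. -/
noncomputable def fbpProfile (s : ℝ) : ℝ :=
  c / b * s + a / b * (z0 - c / b) * (Real.exp (b / a * s) - 1)

noncomputable def fbpSlope (s : ℝ) : ℝ :=
  c / b + (z0 - c / b) * Real.exp (b / a * s)

variable {a b c z0}

@[simp]
theorem fbpProfile_zero : fbpProfile a b c z0 0 = 0 := by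
  simp [fbpProfile]

@[simp]
theorem fbpSlope_zero : fbpSlope a b c z0 0 = z0 := by
  simp [fbpSlope]

theorem continuous_fbpProfile : Continuous (fbpProfile a b c z0) := by
  unfold fbpProfile
  fun_prop

theorem continuous_fbpSlope : Continuous (fbpSlope a b c z0) := by
  unfold fbpSlope
  fun_prop

theorem hasDerivAt_fbpProfile (ha : a ≠ 0) (hb : b ≠ 0) (s : ℝ) :
    HasDerivAt (fbpProfile a b c z0) (fbpSlope a b c z0 s) s := by
  have h := ((hasDerivAt_id s).const_mul (c / b)).add
    (((hasDerivAt_exp_const_mul (b / a) s).sub_const 1).const_mul (a / b * (z0 - c / b)))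
  refine h.congr_deriv ?_
  simp only [fbpSlope]
  field_simp

theorem hasDerivAt_fbpSlope (hb : b ≠ 0) (s : ℝ) :
    HasDerivAt (fbpSlope a b c z0) ((b * fbpSlope a b c z0 s - c) / a) s := by
  have h := ((hasDerivAt_exp_const_mul (b / a) s).const_mul (z0 - c / b)).const_add (c / b)
  refine h.congr_deriv ?_
  simp only [fbpSlope]
  field_simp
  ring

theorem exp_div_mul_le_one (ha : 0 < a) (hb : 0 < b) {s : ℝ} (hs : s ≤ 0) :
    Real.exp (b / a * s) ≤ 1 :=
  Real.exp_le_one_iff.mpr (mul_nonpos_of_nonneg_of_nonpos (div_pos hb ha).le hs)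

theorem fbpSlope_pos (ha : 0 < a) (hb : 0 < b) (hc : 0 < c) (hz0 : 0 < z0) {s : ℝ}
    (hs : s ≤ 0) : 0 < fbpSlope a b c z0 s := by
  have he := exp_div_mul_le_one ha hb hs
  -- `fbpSlope s = c/b (1 - exp (b s / a)) + z₀ exp (b s / a)`, a sum with positive weights
  have hcb : 0 < c / b := div_pos hc hb
  have hwt := Real.exp_pos (b / a * s)
  unfold fbpSlope
  nlinarith [mul_pos hz0 hwt]

theorem strictMonoOn_fbpProfile (ha : 0 < a) (hb : 0 < b) (hc : 0 < c) (hz0 : 0 < z0) :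
    StrictMonoOn (fbpProfile a b c z0) (Iic 0) := by
  refine strictMonoOn_of_deriv_pos (convex_Iic 0) continuous_fbpProfile.continuousOn ?_
  intro s hs
  rw [interior_Iic] at hs
  rw [(hasDerivAt_fbpProfile ha.ne' hb.ne' s).deriv]
  exact fbpSlope_pos ha hb hc hz0 (le_of_lt hs)

theorem fbpProfile_le (ha : 0 < a) (hb : 0 < b) (hc : 0 < c) (hz0 : 0 < z0) {s : ℝ}
    (hs : s ≤ 0) : fbpProfile a b c z0 s ≤ c / b * (s + a / b) := by
  have he := exp_div_mul_le_one ha hb hs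
  have hwt := Real.exp_pos (b / a * s)
  have hab : 0 < a / b := div_pos ha hb
  have hcb : 0 < c / b := div_pos hc hb
  unfold fbpProfile
  nlinarith [mul_nonneg (mul_nonneg hab.le hz0.le) (sub_nonneg.mpr he),
    mul_nonneg (mul_nonneg hab.le hcb.le) hwt.le]

theorem exists_fbpProfile_neg_eq (ha : 0 < a) (hb : 0 < b) (hc : 0 < c) (hz0 : 0 < z0)
    {y0 : ℝ} (hy0 : 0 < y0) : ∃ T > 0, fbpProfile a b c z0 (-T) = -y0 := by
  set s₁ := -(a / b + b * y0 / c)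
  have hs₁ : s₁ ≤ 0 := neg_nonpos.mpr (by positivity)
  have hPs₁ : fbpProfile a b c z0 s₁ ≤ -y0 := by
    refine (fbpProfile_le ha hb hc hz0 hs₁).trans_eq ?_
    simp only [s₁]
    field_simp
    ring
  obtain ⟨s, hs, hPs⟩ := intermediate_value_Icc hs₁ continuous_fbpProfile.continuousOn
    (show -y0 ∈ Icc _ _ by simpa using ⟨hPs₁, hy0.le⟩)
  refine ⟨-s, ?_, by simpa using hPs⟩
  rcases hs.2.lt_or_eq with hneg | rfl
  · exact neg_pos.mpr hneg
  · rw [fbpProfile_zero] at hPs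
    linarith

end Profile

theorem solvesFBP_fbpProfile {a b c y0 z0 T : ℝ} (ha : a ≠ 0) (hb : b ≠ 0)
    (hT : fbpProfile a b c z0 (-T) = -y0) :
    SolvesFBP a b c y0 z0 T (fun x => fbpProfile a b c z0 (x - T)) := by
  have hy x : HasDerivAt (fun x => fbpProfile a b c z0 (x - T)) (fbpSlope a b c z0 (x - T)) x :=
    (hasDerivAt_fbpProfile ha hb _).comp_sub_const x T
  have hderiv : deriv (fun x => fbpProfile a b c z0 (x - T)) = fun x => fbpSlope a b c z0 (x - T) :=
    funext fun x => (hy x).deriv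
  have hz x : HasDerivAt (fun x => fbpSlope a b c z0 (x - T))
      ((b * fbpSlope a b c z0 (x - T) - c) / a) x :=
    (hasDerivAt_fbpSlope hb _).comp_sub_const x T
  refine ⟨fun x _ => ⟨(hy x).differentiableAt, hderiv ▸ (hz x).differentiableAt⟩,
    fun x _ => ?_, by simpa using hT, by simp, by simp [hderiv]⟩
  rw [hderiv, (hz x).deriv]
  field_simp
  ring

theorem SolvesFBP.eqOn_fbpProfile {a b c y0 z0 T : ℝ} {y : ℝ → ℝ} (ha : a ≠ 0)
    (hb : b ≠ 0) (h : SolvesFBP a b c y0 z0 T y) :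
    EqOn y (fun x => fbpProfile a b c z0 (x - T)) (Icc 0 T) := by
  obtain ⟨hdiff, hode, -, hyT, hy'T⟩ := h
  have hy'' : ∀ x ∈ Ioo 0 T, HasDerivAt (deriv y) ((b * deriv y x - c) / a) x := by
    intro x hx
    refine (hdiff x (Ioo_subset_Icc_self hx)).2.hasDerivAt.congr_deriv ?_
    rw [eq_div_iff ha]
    linarith [hode x hx]
  have hslope : EqOn (deriv y) (fun x => fbpSlope a b c z0 (x - T)) (Icc 0 T) := by
    refine fun x hx => sub_eq_zero.mp <| ContinuousOn.eqOn_zero_of_hasDerivAt_mul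
      (u := fun x => deriv y x - fbpSlope a b c z0 (x - T)) (k := b / a) ?_ (fun x hx => ?_) ?_ hx
    · exact (continuousOn_of_forall_continuousAt fun x hx => (hdiff x hx).2.continuousAt).sub
        (continuous_fbpSlope.comp (continuous_sub_right T)).continuousOn
    · refine ((hy'' x hx).sub ((hasDerivAt_fbpSlope hb _).comp_sub_const x T)).congr_deriv ?_
      field_simp
      ring
    · simp [hy'T]
  refine fun x hx => sub_eq_zero.mp ?_
  have hconst := ContinuousOn.apply_eq_right_of_hasDerivAt_zero
    (f := fun x => y x - fbpProfile a b c z0 (x - T))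
    ((continuousOn_of_forall_continuousAt fun x hx => (hdiff x hx).1.continuousAt).sub
      (continuous_fbpProfile.comp (continuous_sub_right T)).continuousOn)
    (fun x hx => by
      refine ((hdiff x (Ioo_subset_Icc_self hx)).1.hasDerivAt.sub
        ((hasDerivAt_fbpProfile ha hb _).comp_sub_const x T)).congr_deriv ?_
      rw [hslope (Ioo_subset_Icc_self hx), sub_self]) x hx
  simpa [hyT] using hconst

theorem fbp_exists_unique (a b c y0 z0 : ℝ)
    (ha : 0 < a) (hb : 0 < b) (hc : 0 < c) (hy0 : 0 < y0) (hz0 : 0 < z0) :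
    ∃ xhat > (0:ℝ), ∃ y : ℝ → ℝ, SolvesFBP a b c y0 z0 xhat y ∧
      ∀ xhat' > (0:ℝ), ∀ y' : ℝ → ℝ, SolvesFBP a b c y0 z0 xhat' y' →
        xhat' = xhat ∧ Set.EqOn y' y (Set.Icc 0 xhat) := by
  obtain ⟨T, hT, hPT⟩ := exists_fbpProfile_neg_eq ha hb hc hz0 hy0
  refine ⟨T, hT, _, solvesFBP_fbpProfile ha.ne' hb.ne' hPT, fun T' hT' y' hy' => ?_⟩
  have hy'eq := hy'.eqOn_fbpProfile ha.ne' hb.ne'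
  have hPT' : fbpProfile a b c z0 (-T') = -y0 := by
    simpa [hy'.2.2.1] using (hy'eq ⟨le_rfl, hT'.le⟩).symm
  have hTT' : T' = T := neg_injective <| (strictMonoOn_fbpProfile ha hb hc hz0).injOn
    (neg_nonpos.mpr hT'.le) (neg_nonpos.mpr hT.le) (hPT'.trans hPT.symm)
  subst hTT'
  exact ⟨rfl, hy'eq⟩
end

section
/- Let $a > 0$, $y_0 > 0$, and define $z_0(\hat x) = 1 + \frac{(y_0 - \hat x)\,e^{\hat x/a}}{a(e^{\hat x/a} - 1)}$ for $\hat x > 0$. Then $z_0$ is strictly decreasing on $(0,\infty)$, and $\lim_{\hat x \downarrow 0} z_0(\hat x) = +\infty$, $\lim_{\hat x \to \infty} z_0(\hat x) = -\infty$. -/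
/-!
With `t = x / a` and `b = y0 / a`,
`z0 x - 1 = (b - t) eᵗ / (eᵗ - 1) = b eᵗ / (eᵗ - 1) - t eᵗ / (eᵗ - 1)`. The first term decreases because `eᵗ / (eᵗ - 1) = 1 + 1 / (eᵗ - 1)`; the second increases because
its reciprocal `(1 - e⁻ᵗ) / t` is the slope of the convex function `exp` over `[-t, 0]`, which
decreases as the left end point moves left. Near `0` the numerator tends to `b > 0` while
`eᵗ - 1 ↓ 0`; at infinity `b - t → -∞` while `eᵗ / (eᵗ - 1) → 1`.
-/

open Real Filter Set Topology

theorem exp_sub_one_pos {t : ℝ} (ht : 0 < t) : 0 < exp t - 1 :=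
  sub_pos.2 (one_lt_exp_iff.2 ht)

theorem one_sub_exp_neg_div_lt {s t : ℝ} (hs : 0 < s) (hst : s < t) :
    (1 - exp (-t)) / t < (1 - exp (-s)) / s := by
  simpa using strictConvexOn_exp.secant_strict_mono_aux3 (mem_univ (-t)) (mem_univ 0)
    (neg_lt_neg hst) (neg_lt_zero.2 hs)

theorem strictAntiOn_exp_div_exp_sub_one :
    StrictAntiOn (fun t : ℝ => exp t / (exp t - 1)) (Ioi 0) := by
  intro s (hs : 0 < s) t (ht : 0 < t) hst
  have hexp : exp s < exp t := exp_lt_exp.2 hst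
  rw [div_lt_div_iff₀ (exp_sub_one_pos ht) (exp_sub_one_pos hs)]
  nlinarith

theorem strictMonoOn_mul_exp_div_exp_sub_one :
    StrictMonoOn (fun t : ℝ => t * exp t / (exp t - 1)) (Ioi 0) := by
  intro s (hs : 0 < s) t (ht : 0 < t) hst
  have slope := one_sub_exp_neg_div_lt hs hst
  rw [exp_neg, exp_neg, div_lt_div_iff₀ ht hs] at slope
  rw [div_lt_div_iff₀ (exp_sub_one_pos hs) (exp_sub_one_pos ht)]
  have := mul_lt_mul_of_pos_left slope (mul_pos (exp_pos s) (exp_pos t))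
  field_simp at this
  linarith

theorem strictAntiOn_sub_mul_exp_div_exp_sub_one {b : ℝ} (hb : 0 ≤ b) :
    StrictAntiOn (fun t : ℝ => (b - t) * exp t / (exp t - 1)) (Ioi 0) := by
  intro s hs t ht hst
  have hconst := mul_le_mul_of_nonneg_left (strictAntiOn_exp_div_exp_sub_one hs ht hst).le hb
  have hlin := strictMonoOn_mul_exp_div_exp_sub_one hs ht hst
  simp only [sub_mul, sub_div, mul_div_assoc] at hconst hlin ⊢
  linarith

theorem tendsto_sub_mul_exp_div_exp_sub_one_nhdsGT_zero {b : ℝ} (hb : 0 < b) :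
    Tendsto (fun t : ℝ => (b - t) * exp t / (exp t - 1)) (𝓝[>] 0) atTop := by
  have hnum : Tendsto (fun t : ℝ => (b - t) * exp t) (𝓝[>] 0) (𝓝 b) :=
    ((by fun_prop : Continuous fun t : ℝ => (b - t) * exp t).tendsto' 0 b (by simp)).mono_left
      nhdsWithin_le_nhds
  have hden : Tendsto (fun t : ℝ => exp t - 1) (𝓝[>] 0) (𝓝[>] 0) := by
    simpa using ((by fun_prop : Continuous fun t : ℝ => exp t - 1).continuousWithinAt
      (s := Ioi 0) (x := 0)).tendsto_nhdsWithin (t := Ioi 0) fun _ => exp_sub_one_pos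
  simpa only [div_eq_mul_inv, Function.comp_apply] using
    hnum.pos_mul_atTop hb (tendsto_inv_nhdsGT_zero.comp hden)

theorem tendsto_sub_mul_exp_div_exp_sub_one_atTop (b : ℝ) :
    Tendsto (fun t : ℝ => (b - t) * exp t / (exp t - 1)) atTop atBot := by
  have hlin : Tendsto (fun t : ℝ => b - t) atTop atBot :=
    tendsto_atBot_add_const_left _ b tendsto_neg_atTop_atBot
  have hratio : Tendsto (fun t : ℝ => exp t / (exp t - 1)) atTop (𝓝 1) := by
    have h := (tendsto_inv_atTop_zero.comp
      (tendsto_atTop_add_const_right _ (-1) tendsto_exp_atTop)).const_add 1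
    rw [add_zero] at h
    refine h.congr' ?_
    filter_upwards [eventually_gt_atTop 0] with t ht
    simp only [Function.comp_apply, ← sub_eq_add_neg]
    field_simp [(exp_sub_one_pos ht).ne']
    ring
  simpa only [mul_div_assoc] using hlin.atBot_mul_pos one_pos hratio

theorem one_add_sub_mul_exp_div_comp_div (a y0 : ℝ) :
    (fun x : ℝ => 1 + (y0 - x) * exp (x / a) / (a * (exp (x / a) - 1))) =
      (fun t : ℝ => 1 + (y0 / a - t) * exp t / (exp t - 1)) ∘ (· / a) := by
  ext x
  simp only [Function.comp_apply]
  rw [← sub_div, div_mul_eq_mul_div, div_div, mul_comm a]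

theorem z0_strictAnti_and_limits (a y0 : ℝ) (ha : 0 < a) (hy0 : 0 < y0) :
    StrictAntiOn (fun xhat : ℝ =>
        1 + (y0 - xhat) * Real.exp (xhat / a) / (a * (Real.exp (xhat / a) - 1)))
      (Set.Ioi 0) ∧
    Filter.Tendsto (fun xhat : ℝ =>
        1 + (y0 - xhat) * Real.exp (xhat / a) / (a * (Real.exp (xhat / a) - 1)))
      (nhdsWithin 0 (Set.Ioi 0)) Filter.atTop ∧
    Filter.Tendsto (fun xhat : ℝ =>
        1 + (y0 - xhat) * Real.exp (xhat / a) / (a * (Real.exp (xhat / a) - 1)))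
      Filter.atTop Filter.atBot := by
  rw [one_add_sub_mul_exp_div_comp_div]
  have hb : 0 < y0 / a := div_pos hy0 ha
  have hscale : MapsTo (· / a) (Ioi (0 : ℝ)) (Ioi 0) := fun x hx => div_pos hx ha
  have hscale_nhdsGT : Tendsto (· / a) (𝓝[>] (0 : ℝ)) (𝓝[>] 0) := by
    simpa using (continuous_id.div_const a).continuousWithinAt.tendsto_nhdsWithin (x := 0) hscale
  refine ⟨?_, ?_, ?_⟩
  · exact ((strictAntiOn_sub_mul_exp_div_exp_sub_one hb.le).const_add 1).comp_strictMonoOn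
      ((strictMono_id.div_const ha).strictMonoOn _) hscale
  · exact (tendsto_atTop_add_const_left _ 1
      (tendsto_sub_mul_exp_div_exp_sub_one_nhdsGT_zero hb)).comp hscale_nhdsGT
  · exact (tendsto_atBot_add_const_left _ 1
      (tendsto_sub_mul_exp_div_exp_sub_one_atTop _)).comp (tendsto_id.atTop_div_const ha)
end
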